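/- Fix m ∈ ℕ and distinct b₀, …, b_m ∈ ℂ. The ℂ[[z]]-module of operators ℂ[[z,w]]/(w^{m+1}) → ℂ[[z]] generated by L_{b_ℓ,k} (0 ≤ ℓ, k ≤ m), where L_{b,k}Φ = (1/k!)((∂/∂w + b∂/∂z)^k Φ)(·,0), equals the ℂ[[z]]-module generated by the operators Φ ↦ (∂^k Φ/∂z^j ∂w^{k-j})(·,0) for 0 ≤ j ≤ k ≤ m. In particular this module is independent of the choice of the distinct points b₀,…,b_m. -/

import Mathlib

open PowerSeries

/-- `ℂ[[z]][[w]]`: a model for the formal power series ring `ℂ[[z,w]]`. -/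
abbrev FPS2 := PowerSeries (PowerSeries ℂ)

/-- The formal partial derivative `∂/∂w` on `ℂ[[z,w]]`. -/
noncomputable def dW : FPS2 → FPS2 := PowerSeries.derivativeFun

/-- The formal partial derivative `∂/∂z` on `ℂ[[z,w]]` (coefficientwise). -/
noncomputable def dZ (Φ : FPS2) : FPS2 :=
  PowerSeries.mk fun k => PowerSeries.derivativeFun (coeff k Φ)

/-- The operator `L_{b,k} Φ = (1/k!)((∂/∂w + b ∂/∂z)^k Φ)(·,0)`. -/
noncomputable def Lbk (b : ℂ) (k : ℕ) (Φ : FPS2) : PowerSeries ℂ :=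
  ((k.factorial : ℂ)⁻¹) •
    constantCoeff ((fun Ψ => dW Ψ + b • dZ Ψ)^[k] Φ)

/-- The operator `Φ ↦ (∂^{j+i}Φ/∂z^j∂w^i)(·,0)`. -/
noncomputable def Dop (j i : ℕ) (Φ : FPS2) : PowerSeries ℂ :=
  constantCoeff (dZ^[j] (dW^[i] Φ))

/-! Since `∂/∂w` and `∂/∂z` commute, the binomial theorem gives
`L_{b,k} = ∑_{j ≤ k} b^j c_{k,j} D_{j,k-j}` with `c_{k,j} = binom(k,j)/k! ≠ 0`, so each
`L_{b,k}` lies in the span of the derivative operators. Conversely, for fixed `k` the operators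
`L_{b_ℓ,k}`, `ℓ ≤ k`, are the images of the `c_{k,j} D_{j,k-j}` under the Vandermonde matrix
`(b_ℓ^j)`, which is invertible because the `b_ℓ` are distinct. -/

open Matrix in
theorem mem_span_range_sum_pow_smul {K M : Type*} [Field K] [AddCommGroup M] [Module K M]
    {n : ℕ} {b : Fin n → K} (hb : Function.Injective b) (f : Fin n → M) (j : Fin n) :
    f j ∈ Submodule.span K (Set.range fun ℓ => ∑ p : Fin n, b ℓ ^ (p : ℕ) • f p) := by
  have hV : IsUnit (vandermonde b).det := (det_vandermonde_ne_zero_iff.2 hb).isUnit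
  set c := Pi.single j 1 ᵥ* (vandermonde b)⁻¹
  have hc : c ᵥ* vandermonde b = Pi.single j 1 := by
    rw [vecMul_vecMul, nonsing_inv_mul _ hV, vecMul_one]
  have hfj : f j = ∑ ℓ, c ℓ • ∑ p : Fin n, b ℓ ^ (p : ℕ) • f p := by
    calc f j = ∑ p, (c ᵥ* vandermonde b) p • f p := by simp [hc, Pi.single_apply]
      _ = _ := by
        simp only [vecMul, dotProduct, vandermonde_apply, Finset.sum_smul, Finset.smul_sum,
          smul_smul]
        exact Finset.sum_comm
  rw [hfj]
  exact Submodule.sum_mem _ fun ℓ _ => Submodule.smul_mem _ _ (Submodule.subset_span ⟨ℓ, rfl⟩)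

theorem dW_apply (Φ : FPS2) : dW Φ = d⁄dX _ Φ := rfl

theorem coeff_dZ (n : ℕ) (Φ : FPS2) : coeff n (dZ Φ) = d⁄dX ℂ (coeff n Φ) := coeff_mk _ _

noncomputable def dWₗ : Module.End ℂ FPS2 where
  toFun := dW
  map_add' Φ Ψ := by simp [dW_apply]
  map_smul' c Φ := by
    ext n : 1
    simp [dW_apply, coeff_derivative]

noncomputable def dZₗ : Module.End ℂ FPS2 where
  toFun := dZ
  map_add' Φ Ψ := by
    ext n : 1
    simp [coeff_dZ]
  map_smul' c Φ := by
    ext n : 1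
    simp [coeff_dZ]

theorem dW_dZ_comm (Φ : FPS2) : dW (dZ Φ) = dZ (dW Φ) := by
  ext n : 1
  rw [dW_apply, coeff_derivative, coeff_dZ, coeff_dZ, dW_apply, coeff_derivative]
  simp [mul_comm]

theorem commute_dWₗ_dZₗ : Commute dWₗ dZₗ := LinearMap.ext dW_dZ_comm

theorem Dop_apply_eq (j i : ℕ) (Φ : FPS2) :
    Dop j i Φ = constantCoeff ((dZₗ ^ j * dWₗ ^ i) Φ) := by
  rw [Module.End.mul_apply, Module.End.pow_apply, Module.End.pow_apply]
  rfl

theorem Lbk_apply_eq (b : ℂ) (k : ℕ) (Φ : FPS2) :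
    Lbk b k Φ = (k.factorial : ℂ)⁻¹ • constantCoeff (((b • dZₗ + dWₗ) ^ k) Φ) := by
  have hstep : (fun Ψ => dW Ψ + b • dZ Ψ) = ⇑(b • dZₗ + dWₗ) := funext fun Ψ => add_comm _ _
  rw [Lbk, hstep, Module.End.pow_apply]

noncomputable def lbkCoeff (k j : ℕ) : ℂ := (k.factorial : ℂ)⁻¹ * k.choose j

theorem lbkCoeff_ne_zero {k j : ℕ} (h : j ≤ k) : lbkCoeff k j ≠ 0 :=
  mul_ne_zero (inv_ne_zero (Nat.cast_ne_zero.2 k.factorial_ne_zero))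
    (Nat.cast_ne_zero.2 (Nat.choose_pos h).ne')

theorem Lbk_eq_sum_Dop (b : ℂ) (k : ℕ) :
    Lbk b k = ∑ p : Fin (k + 1), b ^ (p : ℕ) • (lbkCoeff k p • Dop p (k - p)) := by
  funext Φ
  rw [Lbk_apply_eq, (commute_dWₗ_dZₗ.symm.smul_left b).add_pow, ← Fin.sum_univ_eq_sum_range]
  simp only [LinearMap.sum_apply, map_sum, Finset.smul_sum, Finset.sum_apply]
  refine Finset.sum_congr rfl fun p _ => ?_
  rw [smul_pow, smul_mul_assoc, Module.End.mul_apply, Module.End.natCast_apply,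
    LinearMap.smul_apply, map_nsmul, ← Nat.cast_smul_eq_nsmul ℂ]
  simp only [smul_smul, Pi.smul_apply, Dop_apply_eq, constantCoeff_smul, lbkCoeff]
  ring_nf

theorem Lbk_mem_span_Dop {m k : ℕ} (hk : k ≤ m) (b : ℂ) :
    Lbk b k ∈ Submodule.span (PowerSeries ℂ) {g | ∃ j i : ℕ, j + i ≤ m ∧ g = Dop j i} := by
  rw [Lbk_eq_sum_Dop]
  refine Submodule.sum_mem _ fun p _ => ?_
  refine Submodule.smul_of_tower_mem _ _ (Submodule.smul_of_tower_mem _ _ ?_)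
  exact Submodule.subset_span ⟨p, k - p, by omega, rfl⟩

theorem Dop_mem_span_Lbk {m : ℕ} {b : Fin (m + 1) → ℂ} (hb : Function.Injective b) {j i : ℕ}
    (hji : j + i ≤ m) :
    Dop j i ∈ Submodule.span (PowerSeries ℂ) {g | ∃ ℓ k : Fin (m + 1), g = Lbk (b ℓ) k} := by
  set k := j + i
  have hk : k + 1 ≤ m + 1 := by omega
  have hspan := mem_span_range_sum_pow_smul (hb.comp (Fin.castLE_injective hk))
    (fun p : Fin (k + 1) => lbkCoeff k p • Dop p (k - p)) ⟨j, by omega⟩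
  simp only [← Lbk_eq_sum_Dop, Function.comp_apply] at hspan
  have hDop : Dop j i = (lbkCoeff k j)⁻¹ • (lbkCoeff k j • Dop j (k - j)) := by
    rw [smul_smul, inv_mul_cancel₀ (lbkCoeff_ne_zero (by omega)), one_smul,
      Nat.add_sub_cancel_left]
  rw [hDop]
  refine Submodule.smul_of_tower_mem _ _ (Submodule.span_le_restrictScalars ℂ _ _ ?_)
  refine Submodule.span_mono ?_ hspan
  rintro _ ⟨ℓ, rfl⟩
  exact ⟨Fin.castLE hk ℓ, ⟨k, by omega⟩, rfl⟩

/-- for distinct `b₀,…,b_m`, the `ℂ[[z]]`-module of operators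
generated by `L_{b_ℓ,k}` (`0 ≤ ℓ,k ≤ m`) equals the `ℂ[[z]]`-module generated by
the operators `Φ ↦ (∂^kΦ/∂z^j∂w^{k-j})(·,0)`, `0 ≤ j ≤ k ≤ m`; in particular it
is independent of the choice of the distinct points `b₀,…,b_m`. -/
theorem Lbk_span_eq_derivative_span (m : ℕ)
    (b : Fin (m + 1) → ℂ) (hb : Function.Injective b) :
    Submodule.span (PowerSeries ℂ)
        ({g : FPS2 → PowerSeries ℂ |
          ∃ ℓ k : Fin (m + 1), g = Lbk (b ℓ) (k : ℕ)}) =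
      Submodule.span (PowerSeries ℂ)
        ({g : FPS2 → PowerSeries ℂ | ∃ j i : ℕ, j + i ≤ m ∧ g = Dop j i}) := by
  apply le_antisymm <;> rw [Submodule.span_le]
  · rintro _ ⟨ℓ, k, rfl⟩
    exact Lbk_mem_span_Dop (Nat.lt_succ_iff.mp k.is_lt) (b ℓ)
  · rintro _ ⟨j, i, hji, rfl⟩
    exact Dop_mem_span_Lbk hb hji
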